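/- arXiv:2405.15106 — 3 statements merged into one kernel-verified Lean document; each statement's English description precedes it below -/
import Mathlib

section
/- Let $S_1,\ldots,S_{n+1}$ be exchangeable real-valued random variables. Define the conformal p-value $\hat{u} = \frac{1 + \#\{i \in \{1,\ldots,n\} : S_i \le S_{n+1}\}}{n+1}$. Then $\hat{u}$ is super-uniform: for every $\alpha \in (0,1)$, $\mathbb{P}[\hat{u} \le \alpha] \le \alpha$. -/
/-!
Let `R_j = #{i | S_i ≤ S_j}` be the weak rank of `S_j` among all `n + 1` scores, so that
`û = R_{n+1} / (n + 1)`. For every realisation and every `k`, at most `k` indices have weak rank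
`≤ k`: the largest score among them already dominates all of them. Exchangeability makes the events
`{R_j ≤ k}` equally likely, so `(n + 1) ℙ[R_{n+1} ≤ k] = 𝔼 #{j | R_j ≤ k} ≤ k`; taking
`k = ⌊α (n + 1)⌋` gives `ℙ[û ≤ α] ≤ α`.
-/

open MeasureTheory Finset
open scoped ENNReal

section WeakRank

variable {ι α : Type*} [Fintype ι] [LinearOrder α]

def weakRank (x : ι → α) (j : ι) : ℕ := #{i | x i ≤ x j}

theorem card_weakRank_le_le (x : ι → α) (k : ℕ) : #{j | weakRank x j ≤ k} ≤ k := by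
  rcases ({j | weakRank x j ≤ k} : Finset ι).eq_empty_or_nonempty with h | h
  · simp [h]
  obtain ⟨j₀, hj₀, hmax⟩ := exists_max_image _ x h
  calc #{j | weakRank x j ≤ k} ≤ weakRank x j₀ :=
        card_le_card fun j hj => mem_filter.mpr ⟨mem_univ j, hmax j hj⟩
    _ ≤ k := (mem_filter.mp hj₀).2

theorem weakRank_comp_perm (x : ι → α) (σ : Equiv.Perm ι) (j : ι) :
    weakRank (x ∘ σ) j = weakRank x (σ j) :=
  card_equiv σ fun i => by simp

theorem weakRank_last {n : ℕ} (x : Fin (n + 1) → α) :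
    weakRank x (Fin.last n) = 1 + #{i : Fin n | x i.castSucc ≤ x (Fin.last n)} := by
  rw [weakRank, card_filter, Fin.sum_univ_castSucc, if_pos le_rfl, ← card_filter, add_comm]

theorem measurable_weakRank [MeasurableSpace α] [TopologicalSpace α] [OpensMeasurableSpace α]
    [OrderClosedTopology α] [SecondCountableTopology α] (j : ι) :
    Measurable fun x : ι → α => weakRank x j := by
  simp_rw [weakRank, card_filter]
  exact measurable_sum _ fun i _ => Measurable.ite
    (measurableSet_le (measurable_pi_apply i) (measurable_pi_apply j)) measurable_const
    measurable_const

end WeakRank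

open Classical in
theorem sum_measure_le_of_forall_card_le {Ω ι : Type*} [MeasurableSpace Ω] [Fintype ι]
    (μ : Measure Ω) {s : ι → Set Ω} (hs : ∀ i, MeasurableSet (s i)) {k : ℕ}
    (hk : ∀ ω, #{i | ω ∈ s i} ≤ k) : ∑ i, μ (s i) ≤ k * μ Set.univ := by
  calc ∑ i, μ (s i) = ∫⁻ ω, ∑ i, (s i).indicator 1 ω ∂μ := by
        rw [lintegral_finsetSum _ fun i _ => measurable_one.indicator (hs i)]
        simp_rw [lintegral_indicator_one (hs _)]
    _ ≤ ∫⁻ _, (k : ℝ≥0∞) ∂μ := lintegral_mono fun ω => by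
        simp_rw [Set.indicator_apply, Pi.one_apply, sum_boole]
        exact_mod_cast hk ω
    _ = k * μ Set.univ := lintegral_const _

def Exchangeable {Ω ι β : Type*} [MeasurableSpace Ω] [MeasurableSpace β] (P : Measure Ω)
    (X : Ω → ι → β) : Prop :=
  ∀ σ : Equiv.Perm ι, P.map (fun ω => X ω ∘ σ) = P.map X

section Exchangeable

variable {Ω ι α : Type*} [MeasurableSpace Ω] [Fintype ι] [LinearOrder α] [MeasurableSpace α]
  [TopologicalSpace α] [OpensMeasurableSpace α] [OrderClosedTopology α] [SecondCountableTopology α]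
  {P : Measure Ω} {X : Ω → ι → α}

theorem Exchangeable.measure_weakRank_le_eq (hexch : Exchangeable P X) (hX : Measurable X)
    (k : ℕ) (i j : ι) : P {ω | weakRank (X ω) j ≤ k} = P {ω | weakRank (X ω) i ≤ k} := by
  classical
  set σ := Equiv.swap i j
  have hσ : Measurable fun ω => X ω ∘ σ := by fun_prop
  have hB : MeasurableSet {x : ι → α | weakRank x i ≤ k} :=
    measurable_weakRank i (measurableSet_le measurable_id measurable_const)
  calc P {ω | weakRank (X ω) j ≤ k} = P ((fun ω => X ω ∘ σ) ⁻¹' {x | weakRank x i ≤ k}) := by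
        simp [σ, weakRank_comp_perm]
    _ = P (X ⁻¹' {x | weakRank x i ≤ k}) := by
        rw [← Measure.map_apply hσ hB, hexch σ, Measure.map_apply hX hB]
    _ = P {ω | weakRank (X ω) i ≤ k} := rfl

theorem Exchangeable.measure_weakRank_le_le [IsProbabilityMeasure P] (hexch : Exchangeable P X)
    (hX : Measurable X) (j : ι) (k : ℕ) :
    P {ω | weakRank (X ω) j ≤ k} ≤ k / Fintype.card ι := by
  have : Nonempty ι := ⟨j⟩
  rw [ENNReal.le_div_iff_mul_le (by simp) (by simp), mul_comm]
  calc Fintype.card ι * P {ω | weakRank (X ω) j ≤ k}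
      = ∑ i, P {ω | weakRank (X ω) i ≤ k} := by
        simp [hexch.measure_weakRank_le_eq hX k j]
    _ ≤ k * P Set.univ := sum_measure_le_of_forall_card_le P
        (fun i => measurableSet_le ((measurable_weakRank i).comp hX) measurable_const)
        fun ω => by simpa using card_weakRank_le_le (X ω) k
    _ = k := by simp

end Exchangeable

/-- Super-uniformity of the conformal p-value (ties allowed):
`û = (1 + #{i ≤ n : S_i ≤ S_{n+1}}) / (n+1)` satisfies `ℙ[û ≤ α] ≤ α`. -/
theorem conformal_pvalue_superuniform
    {Ω : Type*} [MeasurableSpace Ω] (P : Measure Ω) [IsProbabilityMeasure P]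
    (n : ℕ) (S : Fin (n + 1) → Ω → ℝ) (hmeas : ∀ i, Measurable (S i))
    (hexch : ∀ σ : Equiv.Perm (Fin (n + 1)),
      Measure.map (fun ω => fun i => S (σ i) ω) P = Measure.map (fun ω => fun i => S i ω) P) :
    ∀ α ∈ Set.Ioo (0 : ℝ) 1,
      P {ω | ((1 + (Finset.univ.filter
            (fun i : Fin n => S i.castSucc ω ≤ S (Fin.last n) ω)).card : ℝ) / (n + 1)) ≤ α}
        ≤ ENNReal.ofReal α := by
  rintro α ⟨hα, -⟩
  set X : Ω → Fin (n + 1) → ℝ := fun ω i => S i ω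
  have hXexch : Exchangeable P X := hexch
  set k := ⌊α * (n + 1)⌋₊
  have hevent : ∀ ω, ((1 + #{i : Fin n | S i.castSucc ω ≤ S (Fin.last n) ω} : ℝ) / (n + 1) ≤ α
      ↔ weakRank (X ω) (Fin.last n) ≤ k) := fun ω => by
    rw [weakRank_last, div_le_iff₀ (by positivity), Nat.le_floor_iff (by positivity)]
    push_cast
    rfl
  have hk : (k : ℝ≥0∞) ≤ ENNReal.ofReal α * (n + 1) := by
    rw [← ENNReal.ofReal_natCast, ← ENNReal.ofReal_natCast n, ← ENNReal.ofReal_one,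
      ← ENNReal.ofReal_add n.cast_nonneg zero_le_one, ← ENNReal.ofReal_mul hα.le]
    exact ENNReal.ofReal_le_ofReal (Nat.floor_le (by positivity))
  calc P {ω | ((1 + #{i : Fin n | S i.castSucc ω ≤ S (Fin.last n) ω} : ℝ) / (n + 1)) ≤ α}
      = P {ω | weakRank (X ω) (Fin.last n) ≤ k} := by simp only [hevent]
    _ ≤ k / (n + 1 : ℕ) := by
        simpa using hXexch.measure_weakRank_le_le (measurable_pi_lambda _ hmeas) (Fin.last n) k
    _ ≤ ENNReal.ofReal α := ENNReal.div_le_of_le_mul (by exact_mod_cast hk)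
end

section
/- Let $S_1,\ldots,S_{n+1}$ be exchangeable real-valued random variables, and let $\hat{Q}$ denote the $\lceil (1-\alpha)(n+1) \rceil$-th smallest value among $S_1,\ldots,S_n$ (with $\hat{Q} = +\infty$ if $\lceil (1-\alpha)(n+1)\rceil > n$). Then $\mathbb{P}[S_{n+1} \le \hat{Q}] \ge 1-\alpha$. -/
/-!
Let `k = ⌈(1 - α)(n + 1)⌉`. Call index `j` *good* for a vector `v` if fewer than `k` coordinates
of `v` are strictly smaller than `v j`. Every `v` with `n + 1` coordinates has at least `k` good
indices (all those with `v j` at most the `k`-th smallest value), so the probabilities of the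
events "`j` is good for `S`" sum to at least `k`. By exchangeability these `n + 1` events all have
the same probability, hence each has probability at least `k / (n + 1) ≥ 1 - α`. For `j = n + 1`
and `k ≤ n`, "`j` is good" is exactly the event `S_{n+1} ≤ Q̂`.
-/

open MeasureTheory
open scoped ENNReal

/-- The `k`-th smallest value (1-indexed) of a finite family of reals. -/
noncomputable def kthSmallest {n : ℕ} (v : Fin n → ℝ) (k : ℕ) : ℝ :=
  ((Multiset.map v Finset.univ.val).sort (· ≤ ·)).getD (k - 1) 0

open Finset

theorem List.Pairwise.lt_countP_iff {α : Type*} [Preorder α] {l : List α}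
    (hl : l.Pairwise (· ≤ ·)) {p : α → Prop} [DecidablePred p] (hp : ∀ ⦃y z⦄, z ≤ y → p y → p z)
    {j : ℕ} (hj : j < l.length) : j < l.countP (fun y => p y) ↔ p l[j] := by
  have hle : ∀ {a b : ℕ} (ha : a < l.length) (hb : b < l.length), a ≤ b → l[a] ≤ l[b] :=
    fun ha hb hab => hl.rel_get_of_le (a := ⟨_, ha⟩) (b := ⟨_, hb⟩) hab
  constructor
  · intro hlt
    by_contra hnot
    have hdrop : (l.drop j).countP (fun y => p y) = 0 := by
      rw [List.countP_eq_zero]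
      intro y hy
      obtain ⟨i, hi, rfl⟩ := List.getElem_of_mem hy
      simp only [List.length_drop, List.getElem_drop, decide_eq_true_eq] at hi ⊢
      exact fun h => hnot (hp (hle hj (by omega) (by omega)) h)
    have := List.countP_append (p := fun y => p y) (l₁ := l.take j) (l₂ := l.drop j)
    rw [List.take_append_drop, hdrop] at this
    have := (l.take j).countP_le_length (p := fun y => p y)
    rw [List.length_take] at this
    omega
  · intro hpj
    have htake : (l.take (j + 1)).countP (fun y => p y) = j + 1 := by
      rw [List.countP_eq_length.mpr, List.length_take]
      · omega
      intro y hy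
      obtain ⟨i, hi, rfl⟩ := List.getElem_of_mem hy
      simp only [List.length_take, lt_min_iff, List.getElem_take, decide_eq_true_eq] at hi ⊢
      exact hp (hle (by omega) hj (by omega)) hpj
    have := (List.take_sublist (j + 1) l).countP_le (p := fun y => p y)
    omega

section kthSmallest
variable {m k : ℕ} (v : Fin m → ℝ)

theorem countP_sort_eq_card_filter (p : ℝ → Prop) [DecidablePred p] :
    ((univ.val.map v).sort (· ≤ ·)).countP (fun y => p y) = #{i | p (v i)} := by
  rw [← Multiset.coe_countP, Multiset.sort_eq, Multiset.countP_map]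
  rfl

variable {v} in
theorem lt_card_filter_iff_kthSmallest (hk : 1 ≤ k) (hkm : k ≤ m) {p : ℝ → Prop} [DecidablePred p]
    (hp : ∀ ⦃y z⦄, z ≤ y → p y → p z) : k ≤ #{i | p (v i)} ↔ p (kthSmallest v k) := by
  set l := (univ.val.map v).sort (· ≤ ·)
  have hlen : l.length = m := by simp [l]
  have hkth : kthSmallest v k = l[k - 1] := List.getD_eq_getElem _ _ _
  rw [hkth, ← (Multiset.pairwise_sort _ _).lt_countP_iff hp, countP_sort_eq_card_filter]
  omega

theorem le_kthSmallest_iff (hk : 1 ≤ k) (hkm : k ≤ m) (x : ℝ) :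
    x ≤ kthSmallest v k ↔ #{i | v i < x} < k := by
  simpa only [not_le, not_lt] using
    (lt_card_filter_iff_kthSmallest hk hkm fun _ _ hzy hy => hzy.trans_lt hy).not.symm

theorem le_card_filter_le_kthSmallest (hk : 1 ≤ k) (hkm : k ≤ m) :
    k ≤ #{i | v i ≤ kthSmallest v k} :=
  (lt_card_filter_iff_kthSmallest hk hkm fun _ _ hzy hy => hzy.trans hy).2 le_rfl

theorem le_card_filter_card_lt (hk : 1 ≤ k) (hkm : k ≤ m) :
    k ≤ #{j | #{i | v i < v j} < k} :=
  (le_card_filter_le_kthSmallest v hk hkm).trans <| card_le_card fun j hj => by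
    simp only [mem_filter, mem_univ, true_and] at hj ⊢
    exact (le_kthSmallest_iff v hk hkm _).1 hj

end kthSmallest

open scoped Classical in
theorem natCast_mul_measure_univ_le_sum {α ι : Type*} [MeasurableSpace α] [Fintype ι]
    (μ : Measure α) {A : ι → Set α} (hA : ∀ j, MeasurableSet (A j)) {k : ℕ}
    (hk : ∀ x, k ≤ #{j | x ∈ A j}) : k * μ Set.univ ≤ ∑ j, μ (A j) :=
  calc k * μ Set.univ = ∫⁻ _, (k : ℝ≥0∞) ∂μ := (lintegral_const _).symm
    _ ≤ ∫⁻ x, ∑ j, (A j).indicator 1 x ∂μ := lintegral_mono fun x => by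
      simp only [Set.indicator_apply, Pi.one_apply, sum_boole]
      exact_mod_cast hk x
    _ = ∑ j, μ (A j) := by
      rw [lintegral_finsetSum _ fun j _ => measurable_one.indicator (hA j)]
      exact sum_congr rfl fun j _ => lintegral_indicator_one (hA j)

section Exchangeable
variable {ι : Type*} [Fintype ι]

theorem measurableSet_card_filter_lt_lt (j : ι) (k : ℕ) :
    MeasurableSet {v : ι → ℝ | #{i | v i < v j} < k} := by
  refine measurableSet_lt ?_ measurable_const
  simp only [card_filter]
  exact Finset.measurable_sum _ fun i _ => Measurable.ite
    (measurableSet_lt (measurable_pi_apply i) (measurable_pi_apply j)) measurable_const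
    measurable_const

variable [DecidableEq ι]

theorem measure_card_filter_lt_lt_eq {μ : Measure (ι → ℝ)}
    (hμ : ∀ σ : Equiv.Perm ι, μ.map (fun v i => v (σ i)) = μ) (j j' : ι) (k : ℕ) :
    μ {v | #{i | v i < v j} < k} = μ {v | #{i | v i < v j'} < k} := by
  have hpre : (fun (v : ι → ℝ) i => v (Equiv.swap j j' i)) ⁻¹' {v | #{i | v i < v j'} < k} =
      {v | #{i | v i < v j} < k} := by
    ext v
    simp only [Set.mem_preimage, Set.mem_ofPred_eq, Equiv.swap_apply_right]
    rw [card_equiv (Equiv.swap j j') (t := {i | v i < v j}) fun i => by simp]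
  rw [← hpre, ← Measure.map_apply (by fun_prop) (measurableSet_card_filter_lt_lt j' k), hμ]

theorem natCast_mul_measure_univ_le_mul_measure_card_filter_lt_lt {m : ℕ}
    {μ : Measure (Fin m → ℝ)} (hμ : ∀ σ : Equiv.Perm (Fin m), μ.map (fun v i => v (σ i)) = μ)
    {k : ℕ} (hk : 1 ≤ k) (hkm : k ≤ m) (j : Fin m) :
    k * μ Set.univ ≤ m * μ {v | #{i | v i < v j} < k} :=
  calc k * μ Set.univ ≤ ∑ j, μ {v | #{i | v i < v j} < k} :=
      natCast_mul_measure_univ_le_sum μ (fun j => measurableSet_card_filter_lt_lt j k)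
        fun v => by convert le_card_filter_card_lt v hk hkm using 3; rfl
    _ = m * μ {v | #{i | v i < v j} < k} := by
      rw [sum_congr rfl fun j' _ => measure_card_filter_lt_lt_eq hμ j' j k, sum_const, card_univ,
        Fintype.card_fin, nsmul_eq_mul]

end Exchangeable

theorem Fin.card_filter_univ_castSucc_of_not_last {n : ℕ} (p : Fin (n + 1) → Prop)
    [DecidablePred p] (h : ¬ p (Fin.last n)) : #{i | p i} = #{i : Fin n | p i.castSucc} := by
  rw [Fin.univ_castSuccEmb, filter_cons_of_neg _ _ _ _ h, filter_map, card_map]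
  rfl

theorem ENNReal.ofReal_le_of_ceil_mul_le {a : ℝ} {N : ℕ} {p : ℝ≥0∞} (hN : N ≠ 0)
    (h : ⌈a * N⌉₊ ≤ N * p) : ENNReal.ofReal a ≤ p := by
  refine (ENNReal.mul_le_mul_iff_right (by exact_mod_cast hN) (ENNReal.natCast_ne_top N)).1 ?_
  calc N * ENNReal.ofReal a = ENNReal.ofReal (a * N) := by
        rw [ENNReal.ofReal_mul' N.cast_nonneg, ENNReal.ofReal_natCast, mul_comm]
    _ ≤ ENNReal.ofReal ⌈a * N⌉₊ := ENNReal.ofReal_le_ofReal (Nat.le_ceil _)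
    _ ≤ N * p := by rwa [ENNReal.ofReal_natCast]

/-- Conformal quantile lemma: with `Q̂` the `⌈(1-α)(n+1)⌉`-th smallest of `S_1, ..., S_n`
(`+∞` if `⌈(1-α)(n+1)⌉ > n`), exchangeability yields `ℙ[S_{n+1} ≤ Q̂] ≥ 1 - α`. -/
theorem conformal_quantile_lemma
    {Ω : Type*} [MeasurableSpace Ω] (P : Measure Ω) [IsProbabilityMeasure P]
    (n : ℕ) (S : Fin (n + 1) → Ω → ℝ) (hmeas : ∀ i, Measurable (S i))
    (hexch : ∀ σ : Equiv.Perm (Fin (n + 1)),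
      Measure.map (fun ω => fun i => S (σ i) ω) P = Measure.map (fun ω => fun i => S i ω) P)
    (α : ℝ) (hα : α ∈ Set.Ioo (0 : ℝ) 1) :
    ENNReal.ofReal (1 - α) ≤
      P {ω | n < ⌈(1 - α) * (n + 1 : ℝ)⌉₊ ∨
        S (Fin.last n) ω ≤ kthSmallest (fun i : Fin n => S i.castSucc ω)
          ⌈(1 - α) * (n + 1 : ℝ)⌉₊} := by
  obtain ⟨hα0, hα1⟩ := hα
  set k := ⌈(1 - α) * (n + 1 : ℝ)⌉₊
  have hk1 : 1 ≤ k := Nat.ceil_pos.2 (mul_pos (by linarith) (by positivity))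
  rcases lt_or_ge n k with hnk | hkn
  · refine (ENNReal.ofReal_le_one.2 (by linarith)).trans_eq ?_
    simp [hnk]
  set X : Ω → Fin (n + 1) → ℝ := fun ω i => S i ω
  have hX : Measurable X := measurable_pi_lambda _ hmeas
  have hlaw : ∀ σ : Equiv.Perm (Fin (n + 1)), (P.map X).map (fun v i => v (σ i)) = P.map X :=
    fun σ => by rw [Measure.map_map (by fun_prop) hX]; exact hexch σ
  have hevent : {ω | n < k ∨ S (Fin.last n) ω ≤ kthSmallest (fun i : Fin n => S i.castSucc ω) k} =
      X ⁻¹' {v | #{i | v i < v (Fin.last n)} < k} := by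
    ext ω
    simp only [Set.mem_ofPred_eq, Set.mem_preimage, hkn.not_gt, false_or, X,
      le_kthSmallest_iff _ hk1 hkn]
    rw [Fin.card_filter_univ_castSucc_of_not_last (fun i => S i ω < S (Fin.last n) ω) (lt_irrefl _)]
  have hbound := natCast_mul_measure_univ_le_mul_measure_card_filter_lt_lt hlaw hk1
    (hkn.trans n.le_succ) (Fin.last n)
  rw [Measure.map_apply hX (measurableSet_card_filter_lt_lt _ _), ← hevent,
    Measure.map_apply hX MeasurableSet.univ, Set.preimage_univ, measure_univ, mul_one] at hbound
  refine ENNReal.ofReal_le_of_ceil_mul_le (N := n + 1) n.succ_ne_zero ?_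
  rwa [Nat.cast_succ (R := ℝ)]
end

section
/- Let $S_1,\ldots,S_{n+1}$ be exchangeable (ties allowed) and define $\hat{u} = \frac{1 + \#\{i \le n : S_i \le S_{n+1}\}}{n+1}$. Then $\hat{u}$ stochastically dominates a random variable uniform on $\{\tfrac{1}{n+1},\ldots,1\}$: for every $t \in [0,1]$, $\mathbb{P}[\hat{u} \le t] \le \frac{\lfloor t(n+1) \rfloor}{n+1}$. -/
/-!
Write `r_j = #{i | S_i ≤ S_j}`, so that `û = r_{n+1}/(n+1)` and `û ≤ t` iff `r_{n+1} ≤ k := ⌊t(n+1)⌋`.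
Whatever the scores, at most `k` indices `j` have `r_j ≤ k`: if `j` has the largest score among
them, all of them are counted in `r_j`. By exchangeability every `r_j` has the law of `r_{n+1}`,
so `(n+1) ℙ[r_{n+1} ≤ k] = 𝔼 #{j | r_j ≤ k} ≤ k`.
-/

open MeasureTheory Finset
open scoped ENNReal

section Rank

variable {ι α : Type*} [Fintype ι] [LinearOrder α]

def rankLE (s : ι → α) (j : ι) : ℕ := #{i | s i ≤ s j}

theorem card_rankLE_le_le (s : ι → α) (k : ℕ) : #{j | rankLE s j ≤ k} ≤ k := by
  obtain h | ⟨j, hj, hmax⟩ := ({j | rankLE s j ≤ k} : Finset ι).eq_empty_or_nonempty.imp id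
    fun h => exists_max_image _ s h
  · simp [h]
  · calc #{j | rankLE s j ≤ k} ≤ rankLE s j :=
          card_le_card fun i hi => mem_filter.2 ⟨mem_univ i, hmax i hi⟩
      _ ≤ k := (mem_filter.1 hj).2

theorem rankLE_comp_perm (s : ι → α) (σ : Equiv.Perm ι) (j : ι) :
    rankLE (s ∘ σ) j = rankLE s (σ j) :=
  card_equiv σ (by simp)

theorem measurable_rankLE [TopologicalSpace α] [MeasurableSpace α] [OpensMeasurableSpace α]
    [OrderClosedTopology α] [SecondCountableTopology α] (j : ι) :
    Measurable fun s : ι → α => rankLE s j := by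
  simp only [rankLE, card_filter]
  exact Finset.measurable_sum _ fun i _ => Measurable.ite
    (measurableSet_le (measurable_pi_apply i) (measurable_pi_apply j))
    measurable_const measurable_const

theorem rankLE_last {n : ℕ} (s : Fin (n + 1) → α) :
    rankLE s (Fin.last n) = 1 + #{i : Fin n | s i.castSucc ≤ s (Fin.last n)} := by
  simp only [rankLE, card_filter, Fin.sum_univ_castSucc, le_refl, if_true]
  ring

end Rank

open Classical in
theorem sum_measure_le_of_card_le {ι Ω : Type*} [Fintype ι] [MeasurableSpace Ω] (μ : Measure Ω)
    {E : ι → Set Ω} (hE : ∀ j, MeasurableSet (E j)) {k : ℕ}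
    (hcard : ∀ ω, #{j | ω ∈ E j} ≤ k) : ∑ j, μ (E j) ≤ k * μ Set.univ := by
  calc ∑ j, μ (E j) = ∫⁻ ω, ∑ j, (E j).indicator 1 ω ∂μ := by
        rw [lintegral_finsetSum _ fun j _ => measurable_one.indicator (hE j)]
        simp only [lintegral_indicator_one (hE _)]
    _ = ∫⁻ ω, (#{j | ω ∈ E j} : ℝ≥0∞) ∂μ := by
        simp [Set.indicator_apply]
    _ ≤ ∫⁻ _, (k : ℝ≥0∞) ∂μ := lintegral_mono fun ω => Nat.cast_le.2 (hcard ω)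
    _ = k * μ Set.univ := lintegral_const _

theorem measure_rankLE_le_eq_of_exchangeable {Ω ι α : Type*} [MeasurableSpace Ω] [Fintype ι]
    [DecidableEq ι] [LinearOrder α] [TopologicalSpace α] [MeasurableSpace α]
    [OpensMeasurableSpace α] [OrderClosedTopology α] [SecondCountableTopology α]
    (P : Measure Ω) {X : Ω → ι → α} (hX : Measurable X)
    (hexch : ∀ σ : Equiv.Perm ι, P.map (fun ω => X ω ∘ σ) = P.map X) (j j' : ι) (k : ℕ) :
    P {ω | rankLE (X ω) j ≤ k} = P {ω | rankLE (X ω) j' ≤ k} := by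
  set σ := Equiv.swap j' j
  have hB : MeasurableSet {s : ι → α | rankLE s j' ≤ k} :=
    measurable_rankLE j' (measurableSet_Iic (a := k))
  have hXσ : Measurable fun ω => X ω ∘ σ :=
    (measurable_pi_lambda _ fun i => measurable_pi_apply (σ i)).comp hX
  calc P {ω | rankLE (X ω) j ≤ k} = P ((fun ω => X ω ∘ σ) ⁻¹' {s | rankLE s j' ≤ k}) := by
        simp [rankLE_comp_perm, σ]
    _ = P (X ⁻¹' {s | rankLE s j' ≤ k}) := by
        rw [← Measure.map_apply hXσ hB, hexch, Measure.map_apply hX hB]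
    _ = P {ω | rankLE (X ω) j' ≤ k} := rfl

/-- Sharpened super-uniformity under possible ties: the conformal p-value
`û = (1 + #{i ≤ n : S_i ≤ S_{n+1}})/(n+1)` stochastically dominates the uniform
distribution on `{1/(n+1), ..., 1}`: `ℙ[û ≤ t] ≤ ⌊t(n+1)⌋/(n+1)` for all `t ∈ [0,1]`. -/
theorem conformal_pvalue_discrete_dominance
    {Ω : Type*} [MeasurableSpace Ω] (P : Measure Ω) [IsProbabilityMeasure P]
    (n : ℕ) (S : Fin (n + 1) → Ω → ℝ) (hmeas : ∀ i, Measurable (S i))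
    (hexch : ∀ σ : Equiv.Perm (Fin (n + 1)),
      Measure.map (fun ω => fun i => S (σ i) ω) P = Measure.map (fun ω => fun i => S i ω) P) :
    ∀ t ∈ Set.Icc (0 : ℝ) 1,
      P {ω | ((1 + (Finset.univ.filter
            (fun i : Fin n => S i.castSucc ω ≤ S (Fin.last n) ω)).card : ℝ) / (n + 1)) ≤ t}
        ≤ (⌊t * (n + 1)⌋₊ : ℝ≥0∞) / (n + 1 : ℝ≥0∞) := by
  intro t ht
  set k := ⌊t * (n + 1)⌋₊
  set X : Ω → Fin (n + 1) → ℝ := fun ω i => S i ω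
  have hX : Measurable X := measurable_pi_lambda _ hmeas
  let E : Fin (n + 1) → Set Ω := fun j => {ω | rankLE (X ω) j ≤ k}
  have hevent : {ω | ((1 + (Finset.univ.filter
      (fun i : Fin n => S i.castSucc ω ≤ S (Fin.last n) ω)).card : ℝ) / (n + 1)) ≤ t}
      = E (Fin.last n) := by
    ext ω
    change _ ↔ rankLE (X ω) (Fin.last n) ≤ k
    rw [rankLE_last, Nat.le_floor_iff (by have := ht.1; positivity),
      Set.mem_ofPred_eq, div_le_iff₀ (by positivity)]
    push_cast
    rfl
  have hsum : ∑ j, P (E j) ≤ k * P Set.univ :=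
    sum_measure_le_of_card_le P (fun j => (measurable_rankLE j).comp hX measurableSet_Iic)
      fun ω => by convert card_rankLE_le_le (X ω) k; exact Iff.rfl
  have hequal : ∀ j, P (E j) = P (E (Fin.last n)) := fun j =>
    measure_rankLE_le_eq_of_exchangeable P hX hexch j (Fin.last n) k
  rw [hevent, ENNReal.le_div_iff_mul_le (by simp) (by simp), mul_comm]
  simpa [hequal] using hsum
end
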